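/- For all natural numbers x, y, z, the predicate tplus x y z holds if and only if x + y = z. (This makes precise the paper's claim that tplus represents tail-recursive addition of natural numbers.) -/
import Mathlib


inductive IsNat : ℕ → Prop
  | zero : IsNat 0
  | succ : ∀ x, IsNat x → IsNat (x + 1)

inductive TPlus : ℕ → ℕ → ℕ → Prop
  | base : ∀ x, IsNat x → TPlus 0 x x
  | step : ∀ x y z, TPlus x (y + 1) z → TPlus (x + 1) y z

lemma isnat_all (n : ℕ) : IsNat n := by
  induction n with
  | zero => exact IsNat.zero
  | succ n ih => exact IsNat.succ n ih

theorem tplus_iff_add (x y z : ℕ) : TPlus x y z ↔ x + y = z := by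
  constructor
  · intro h
    induction h with
    | base x _ => simp
    | step x y z _ ih => omega
  · intro h
    induction x generalizing y with
    | zero => subst h; simpa using TPlus.base y (isnat_all y)
    | succ n ih => exact TPlus.step n y z (ih (y + 1) (by omega))
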